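/- arXiv:2206.02088 — 7 statements merged into one kernel-verified Lean document; each statement's English description precedes it below -/
import Mathlib

section
/- Let ε₁,…,ε_K ∈ ℝᵐ be vectors indexed by m-subsets F of {1,…,M}, i.e. for each m-subset F we have a vector ε_F ∈ ℝ^M whose coordinates outside F are zero. Then the ℓ₂-norm of the average satisfies ‖(1/C(M,m)) ∑_F ε_F‖₂ ≤ √(m/M) · √((1/C(M,m)) ∑_F ‖ε_F‖₂²), where the sums are over all m-subsets F of {1,…,M}. -/
/-!
Coordinatewise Cauchy–Schwarz: the `j`-th coordinate of `∑ F, ε F` only receives contributions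
from the `C(M-1, m-1)` subsets `F ∋ j`, so its square is at most `C(M-1, m-1) ∑ F, (ε F j)²`.
Summing over `j` gives `‖∑ F, ε F‖² ≤ C(M-1, m-1) ∑ F, ‖ε F‖²`, and
`C(M-1, m-1) = (m / M) C(M, m)`.
-/

open Finset

theorem sq_sum_le_of_card_filter_le {κ : Type*} (P : Finset κ) (p : κ → Prop) [DecidablePred p]
    (f : κ → ℝ) (hf : ∀ F ∈ P, ¬ p F → f F = 0) {c : ℝ} (hc : (#{F ∈ P | p F} : ℝ) ≤ c) :
    (∑ F ∈ P, f F) ^ 2 ≤ c * ∑ F ∈ P, f F ^ 2 := by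
  have hsum : ∑ F ∈ P with p F, f F = ∑ F ∈ P, f F :=
    sum_filter_of_ne fun F hF hne => by_contra fun hp => hne (hf F hF hp)
  calc (∑ F ∈ P, f F) ^ 2
      = (∑ F ∈ P with p F, f F) ^ 2 := by rw [hsum]
    _ ≤ #{F ∈ P | p F} * ∑ F ∈ P with p F, f F ^ 2 := sq_sum_le_card_mul_sum_sq
    _ ≤ c * ∑ F ∈ P, f F ^ 2 :=
        mul_le_mul hc (sum_le_sum_of_subset_of_nonneg (filter_subset _ _) fun _ _ _ => sq_nonneg _)
          (sum_nonneg fun _ _ => sq_nonneg _) ((Nat.cast_nonneg _).trans hc)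

theorem norm_sum_sq_le_of_card_filter_mem_le {ι : Type*} [Fintype ι] [DecidableEq ι]
    (P : Finset (Finset ι)) (v : Finset ι → EuclideanSpace ℝ ι)
    (hv : ∀ F ∈ P, ∀ j, j ∉ F → v F j = 0) {c : ℝ} (hc : ∀ j, (#{F ∈ P | j ∈ F} : ℝ) ≤ c) :
    ‖∑ F ∈ P, v F‖ ^ 2 ≤ c * ∑ F ∈ P, ‖v F‖ ^ 2 := by
  simp only [EuclideanSpace.norm_sq_eq, Real.norm_eq_abs, sq_abs, WithLp.ofLp_sum,
    Finset.sum_apply]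
  calc ∑ j, (∑ F ∈ P, v F j) ^ 2
      ≤ ∑ j, c * ∑ F ∈ P, v F j ^ 2 :=
        sum_le_sum fun j _ => sq_sum_le_of_card_filter_le P (j ∈ ·) _ (fun F hF => hv F hF j) (hc j)
    _ = c * ∑ F ∈ P, ∑ j, v F j ^ 2 := by rw [← mul_sum, sum_comm]

theorem card_mul_card_filter_mem_powersetCard {α : Type*} [DecidableEq α] {s : Finset α} {j : α}
    (hj : j ∈ s) {m : ℕ} (hm : 1 ≤ m) :
    #s * #{F ∈ s.powersetCard m | j ∈ F} = m * (#s).choose m := by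
  have hcount := card_filter_powersetCard_subset {j} s m (singleton_subset_iff.2 hj)
    (by rwa [card_singleton])
  simp only [singleton_subset_iff, card_singleton] at hcount
  obtain ⟨n, hn⟩ : ∃ n, #s = n + 1 := Nat.exists_eq_succ_of_ne_zero (card_ne_zero_of_mem hj)
  obtain ⟨k, rfl⟩ : ∃ k, m = k + 1 := Nat.exists_eq_add_of_le' hm
  rw [hcount, hn, Nat.add_sub_cancel, Nat.add_sub_cancel, Nat.add_one_mul_choose_eq, mul_comm]

theorem average_supported_vectors_norm_bound_general (M m : ℕ) (hm : 1 ≤ m)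
    (ε : Finset (Fin M) → EuclideanSpace ℝ (Fin M))
    (hsupp : ∀ F ∈ Finset.powersetCard m (Finset.univ : Finset (Fin M)),
      ∀ j : Fin M, j ∉ F → ε F j = 0) :
    ‖((M.choose m : ℝ))⁻¹ • ∑ F ∈ Finset.powersetCard m (Finset.univ : Finset (Fin M)), ε F‖
      ≤ Real.sqrt ((m : ℝ) / M) *
        Real.sqrt (((M.choose m : ℝ))⁻¹ *
          ∑ F ∈ Finset.powersetCard m (Finset.univ : Finset (Fin M)), ‖ε F‖ ^ 2) := by
  set P := powersetCard m (univ : Finset (Fin M))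
  have hcount (j : Fin M) : (#{F ∈ P | j ∈ F} : ℝ) ≤ m * (M.choose m : ℝ) / M := by
    have h := card_mul_card_filter_mem_powersetCard (mem_univ j) hm
    rw [card_univ, Fintype.card_fin] at h
    rw [le_div_iff₀ (by exact_mod_cast j.pos), mul_comm]
    exact_mod_cast h.le
  have hsq := norm_sum_sq_le_of_card_filter_mem_le P ε hsupp hcount
  set K : ℝ := (M.choose m : ℝ)
  rw [← Real.sqrt_mul (by positivity)]
  refine Real.le_sqrt_of_sq_le ?_
  calc ‖K⁻¹ • ∑ F ∈ P, ε F‖ ^ 2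
      = K⁻¹ ^ 2 * ‖∑ F ∈ P, ε F‖ ^ 2 := by
        rw [norm_smul, mul_pow, norm_inv, Real.norm_natCast]
    _ ≤ K⁻¹ ^ 2 * (m * K / M * ∑ F ∈ P, ‖ε F‖ ^ 2) := by gcongr
    -- this shape lets `mul_self_mul_inv` cancel without knowing `K ≠ 0`
    _ = m / M * (K⁻¹ * K⁻¹ * K⁻¹⁻¹ * ∑ F ∈ P, ‖ε F‖ ^ 2) := by rw [inv_inv]; ring
    _ = m / M * (K⁻¹ * ∑ F ∈ P, ‖ε F‖ ^ 2) := by rw [mul_self_mul_inv]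

/-- The ℓ₂-norm of the average of vectors ε_F ∈ ℝ^M, each supported on its
m-subset F of {1,…,M}, is at most √(m/M) times the root-mean-square of their norms. -/
theorem average_supported_vectors_norm_bound (M m : ℕ) (hm : 1 ≤ m) (hmM : m ≤ M)
    (ε : Finset (Fin M) → EuclideanSpace ℝ (Fin M))
    (hsupp : ∀ F ∈ Finset.powersetCard m (Finset.univ : Finset (Fin M)),
      ∀ j : Fin M, j ∉ F → ε F j = 0) :
    ‖((M.choose m : ℝ))⁻¹ • ∑ F ∈ Finset.powersetCard m (Finset.univ : Finset (Fin M)), ε F‖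
      ≤ Real.sqrt ((m : ℝ) / M) *
        Real.sqrt (((M.choose m : ℝ))⁻¹ *
          ∑ F ∈ Finset.powersetCard m (Finset.univ : Finset (Fin M)), ‖ε F‖ ^ 2) :=
  average_supported_vectors_norm_bound_general M m hm ε hsupp
end

section
/- Under the assumption that changing one training sample changes any minipatch prediction by at most B·n/(N−1) in ℓ₂-norm, and that the error function is L-Lipschitz in the prediction, the leave-one-covariate-out score h_j(X,Y; training set) changes by at most 2·L·B·n/(N−1) when one training sample (other than the test point) is replaced. Consequently the loss stability satisfies γ_loss(h_j) ≤ 16·L²·B²·n²/(N−1)². -/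
open MeasureTheory

/-- If replacing one training sample changes the ensembled predictions (full and
leave-one-covariate-out) by at most B·n/(N−1) in ℓ₂-norm and the error function is L-Lipschitz
in the prediction, then the LOCO score changes by at most 2·L·B·n/(N−1); consequently the loss
stability γ_loss (average over the N−1 replaced samples of the second moments of the centered
differences, each bounded by 4·L·B·n/(N−1)) satisfies γ_loss ≤ 16·L²·B²·n²/(N−1)². -/
theorem loco_score_stability {d : ℕ} {Ω : Type*} [MeasurableSpace Ω]
    (μ : Measure Ω) [IsProbabilityMeasure μ]
    (L B : ℝ) (n N : ℕ) (hN : 2 ≤ N)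
    (Err : ℝ → EuclideanSpace ℝ (Fin d) → ℝ)
    (hLip : ∀ (Y : ℝ) (v w : EuclideanSpace ℝ (Fin d)), |Err Y v - Err Y w| ≤ L * ‖v - w‖)
    (Y : ℝ) (f f' g g' : EuclideanSpace ℝ (Fin d))
    (hf : ‖f - f'‖ ≤ B * n / ((N : ℝ) - 1)) (hg : ‖g - g'‖ ≤ B * n / ((N : ℝ) - 1))
    (D : Fin (N - 1) → Ω → ℝ)
    (hD : ∀ l, ∀ᵐ ω ∂μ, |D l ω| ≤ 4 * L * B * n / ((N : ℝ) - 1)) :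
    |(Err Y g - Err Y f) - (Err Y g' - Err Y f')| ≤ 2 * L * B * n / ((N : ℝ) - 1)
    ∧ ((N : ℝ) - 1)⁻¹ * ∑ l : Fin (N - 1), ∫ ω, (D l ω) ^ 2 ∂μ
        ≤ 16 * L ^ 2 * B ^ 2 * n ^ 2 / ((N : ℝ) - 1) ^ 2 := by
  have hN1 : (1 : ℕ) ≤ N - 1 := by omega
  have hNpos : (0 : ℝ) < (N : ℝ) - 1 := by
    have : (2 : ℝ) ≤ (N : ℝ) := by exact_mod_cast hN
    linarith
  set C : ℝ := 4 * L * B * n / ((N : ℝ) - 1) with hCdef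
  -- C is nonnegative: from hD at some index and some ω
  have hC0 : 0 ≤ C := by
    obtain ⟨ω, hω⟩ := (hD ⟨0, by omega⟩).exists
    exact le_trans (abs_nonneg _) hω
  have hLBn : 0 ≤ L * B * n / ((N : ℝ) - 1) := by
    have : C = 4 * (L * B * n / ((N : ℝ) - 1)) := by rw [hCdef]; ring
    nlinarith
  -- key Lipschitz-type bound
  have key : ∀ v w : EuclideanSpace ℝ (Fin d), ‖v - w‖ ≤ B * n / ((N : ℝ) - 1) →
      |Err Y v - Err Y w| ≤ L * B * n / ((N : ℝ) - 1) := by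
    intro v w hvw
    have h1 := hLip Y v w
    rcases le_or_gt 0 L with hL | hL
    · calc |Err Y v - Err Y w| ≤ L * ‖v - w‖ := h1
        _ ≤ L * (B * n / ((N : ℝ) - 1)) := by
            exact mul_le_mul_of_nonneg_left hvw hL
        _ = L * B * n / ((N : ℝ) - 1) := by ring
    · have h2 : L * ‖v - w‖ ≤ 0 :=
        mul_nonpos_of_nonpos_of_nonneg hL.le (norm_nonneg _)
      exact le_trans (le_trans h1 h2) hLBn
  constructor
  · have h1 := key g g' hg
    have h2 := key f f' hf
    have : |(Err Y g - Err Y f) - (Err Y g' - Err Y f')|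
        ≤ |Err Y g - Err Y g'| + |Err Y f - Err Y f'| := by
      have := abs_sub (Err Y g - Err Y g') (Err Y f - Err Y f')
      calc |(Err Y g - Err Y f) - (Err Y g' - Err Y f')|
          = |(Err Y g - Err Y g') - (Err Y f - Err Y f')| := by ring_nf
        _ ≤ |Err Y g - Err Y g'| + |Err Y f - Err Y f'| := abs_sub _ _
    have : |(Err Y g - Err Y f) - (Err Y g' - Err Y f')|
        ≤ L * B * n / ((N : ℝ) - 1) + L * B * n / ((N : ℝ) - 1) := by linarith
    calc |(Err Y g - Err Y f) - (Err Y g' - Err Y f')|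
        ≤ L * B * n / ((N : ℝ) - 1) + L * B * n / ((N : ℝ) - 1) := this
      _ = 2 * L * B * n / ((N : ℝ) - 1) := by ring
  · have hint : ∀ l : Fin (N - 1), ∫ ω, (D l ω) ^ 2 ∂μ ≤ C ^ 2 := by
      intro l
      by_cases hI : Integrable (fun ω => (D l ω) ^ 2) μ
      · have hae : ∀ᵐ ω ∂μ, (D l ω) ^ 2 ≤ C ^ 2 := by
          filter_upwards [hD l] with ω hω
          calc (D l ω) ^ 2 = |D l ω| ^ 2 := by rw [sq_abs]
            _ ≤ C ^ 2 := by
                exact pow_le_pow_left₀ (abs_nonneg _) hω 2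
        calc ∫ ω, (D l ω) ^ 2 ∂μ ≤ ∫ _, C ^ 2 ∂μ :=
              integral_mono_ae hI (integrable_const _) hae
          _ = C ^ 2 := by simp
      · rw [integral_undef hI]
        positivity
    have hsum : ∑ l : Fin (N - 1), ∫ ω, (D l ω) ^ 2 ∂μ ≤ (N - 1 : ℕ) * C ^ 2 := by
      calc ∑ l : Fin (N - 1), ∫ ω, (D l ω) ^ 2 ∂μ
          ≤ ∑ _l : Fin (N - 1), C ^ 2 := Finset.sum_le_sum fun l _ => hint l
        _ = (N - 1 : ℕ) * C ^ 2 := by simp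
    have hcast : ((N - 1 : ℕ) : ℝ) = (N : ℝ) - 1 := by
      have : (1 : ℕ) ≤ N := by omega
      push_cast [this]; ring
    have hCsq : C ^ 2 = 16 * L ^ 2 * B ^ 2 * n ^ 2 / ((N : ℝ) - 1) ^ 2 := by
      rw [hCdef, div_pow]; ring_nf
    calc ((N : ℝ) - 1)⁻¹ * ∑ l : Fin (N - 1), ∫ ω, (D l ω) ^ 2 ∂μ
        ≤ ((N : ℝ) - 1)⁻¹ * ((N - 1 : ℕ) * C ^ 2) := by
          exact mul_le_mul_of_nonneg_left hsum (inv_nonneg.mpr hNpos.le)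
      _ = C ^ 2 := by rw [hcast]; field_simp
      _ = 16 * L ^ 2 * B ^ 2 * n ^ 2 / ((N : ℝ) - 1) ^ 2 := hCsq
end

section
/- Let A ∈ ℝ^{(N+1)×(N+1)} be any matrix with zero diagonal and entries in {0,1} satisfying the comparison property A_{i₁,i₂} + A_{i₂,i₁} ≤ 1 for all i₁ ≠ i₂. Define S(A) = {i : ∑_{i'} A_{i,i'} ≥ (1−α)(N+1)}. Then |S(A)| < 2α(N+1). -/
/-!
Count the total weight of the rows indexed by the strange set `S`, with `s = #S`. Each row has
weight at least `(1 - α)(N + 1)`. Inside `S × S` every unordered pair `{i, j}` contributes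
`A i j + A j i ≤ 1`, so at most `s.choose 2`; the block `S × Sᶜ` contributes at most `s (N + 1 - s)`.
Hence `s (1 - α)(N + 1) ≤ s (s - 1) / 2 + s (N + 1 - s)`, which for `s > 0` rearranges to
`s + 1 ≤ 2α(N + 1)`.
-/

open Finset

namespace Matrix

variable {ι : Type*} [DecidableEq ι] {A : Matrix ι ι ℝ}

theorem sum_sum_le_choose_two (hdiag : ∀ i, A i i = 0)
    (hcomp : ∀ i j, i ≠ j → A i j + A j i ≤ 1) (S : Finset ι) :
    ∑ i ∈ S, ∑ j ∈ S, A i j ≤ (#S).choose 2 := by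
  have hpair : ∀ i j, A i j + A j i ≤ 1 - if i = j then 1 else 0 := by
    intro i j
    by_cases h : i = j
    · simp [h, hdiag]
    · simpa [h] using hcomp i j h
  have hsymm : 2 * ∑ i ∈ S, ∑ j ∈ S, A i j = ∑ i ∈ S, ∑ j ∈ S, (A i j + A j i) := by
    simp only [sum_add_distrib, sum_comm (s := S) (t := S) (f := fun i j => A j i)]
    ring
  have hrow : ∀ i ∈ S, ∑ j ∈ S, (1 - if i = j then (1 : ℝ) else 0) = #S - 1 := by
    intro i hi
    simp [sum_sub_distrib, hi]
  have htotal : 2 * ∑ i ∈ S, ∑ j ∈ S, A i j ≤ #S * (#S - 1) :=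
    calc 2 * ∑ i ∈ S, ∑ j ∈ S, A i j
        ≤ ∑ i ∈ S, ∑ j ∈ S, (1 - if i = j then (1 : ℝ) else 0) := by
          rw [hsymm]; gcongr with i _ j _; exact hpair i j
      _ = #S * (#S - 1) := by rw [sum_congr rfl hrow, sum_const, nsmul_eq_mul]
  rw [Nat.cast_choose_two]
  linarith

theorem card_mul_le_of_le_rowSum [Fintype ι] (hle : ∀ i j, A i j ≤ 1) (hdiag : ∀ i, A i i = 0)
    (hcomp : ∀ i j, i ≠ j → A i j + A j i ≤ 1) {S : Finset ι} {c : ℝ}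
    (hS : ∀ i ∈ S, c ≤ ∑ j, A i j) :
    #S * c ≤ (#S).choose 2 + #S * #Sᶜ :=
  calc #S * c
      ≤ ∑ i ∈ S, ∑ j, A i j := by
        simpa [nsmul_eq_mul] using card_nsmul_le_sum S _ c hS
    _ = ∑ i ∈ S, ∑ j ∈ S, A i j + ∑ i ∈ S, ∑ j ∈ Sᶜ, A i j := by
        rw [← sum_add_distrib]; simp only [sum_add_sum_compl]
    _ ≤ (#S).choose 2 + ∑ _i ∈ S, (#Sᶜ : ℝ) := by
        gcongr ?_ + ?_
        · exact sum_sum_le_choose_two hdiag hcomp S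
        · exact sum_le_sum fun i _ => by
            simpa [nsmul_eq_mul] using sum_le_card_nsmul Sᶜ (A i) 1 fun j _ => hle i j
    _ = (#S).choose 2 + #S * #Sᶜ := by rw [sum_const, nsmul_eq_mul]

end Matrix

theorem card_lt_of_mul_le_choose_two_add {s n : ℕ} {α : ℝ} (hα : 0 < α) (hn : 0 < n) (hsn : s ≤ n)
    (h : s * ((1 - α) * n) ≤ s.choose 2 + s * ((n - s : ℕ) : ℝ)) :
    (s : ℝ) < 2 * α * n := by
  rw [Nat.cast_choose_two, Nat.cast_sub hsn] at h
  have hn' : (0 : ℝ) < n := by exact_mod_cast hn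
  rcases Nat.eq_zero_or_pos s with rfl | hs
  · rw [Nat.cast_zero]; positivity
  · have hs' : (1 : ℝ) ≤ s := by exact_mod_cast hs
    nlinarith

/-- For a zero-diagonal {0,1}-matrix A on [N+1] with A_{ij} + A_{ji} ≤ 1 for
i ≠ j, the set S(A) = {i : ∑_{i'} A_{i,i'} ≥ (1−α)(N+1)} satisfies |S(A)| < 2α(N+1). -/
theorem strange_set_card_lt (N : ℕ) (α : ℝ) (hα : 0 < α)
    (A : Matrix (Fin (N + 1)) (Fin (N + 1)) ℝ)
    (h01 : ∀ i j, A i j = 0 ∨ A i j = 1)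
    (hdiag : ∀ i, A i i = 0)
    (hcomp : ∀ i j, i ≠ j → A i j + A j i ≤ 1) :
    ((Finset.univ.filter (fun i : Fin (N + 1) =>
        (1 - α) * ((N : ℝ) + 1) ≤ ∑ j, A i j)).card : ℝ) < 2 * α * ((N : ℝ) + 1) := by
  set S := univ.filter fun i : Fin (N + 1) => (1 - α) * ((N : ℝ) + 1) ≤ ∑ j, A i j
  have hle : ∀ i j, A i j ≤ 1 := fun i j => by rcases h01 i j with h | h <;> simp [h]
  have hcount := A.card_mul_le_of_le_rowSum hle hdiag hcomp (S := S) fun i hi => (mem_filter.mp hi).2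
  rw [card_compl, Fintype.card_fin] at hcount
  have hS : #S ≤ N + 1 := (card_le_univ S).trans_eq (Fintype.card_fin _)
  exact_mod_cast card_lt_of_mul_le_choose_two_add hα N.succ_pos hS (by exact_mod_cast hcount)
end

section
/- With Δ_j^{*(L)} = γ(2−γ)β_j*² − (2γ/(M−1) − γ²(2M−1)/(M−1)²)‖β*_{\j}‖₂² and 0 < γ < 1: (i) if β_j* = 0 and M ≥ (2−γ)/(2−2γ), then Δ_j^{*(L)} ≤ 0; (ii) if β_j*² > ((2−2γ)/(2−γ))·‖β*_{\j}‖₂²/(M−1), then Δ_j^{*(L)} > 0. -/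
open Finset

/-- With Δ_j^{*(L)} = γ(2−γ)β_j² − (2γ/(M−1) − γ²(2M−1)/(M−1)²)‖β_{\j}‖₂² and
0 < γ < 1: (i) if β_j = 0 and M ≥ (2−γ)/(2−2γ) then Δ_j^{*(L)} ≤ 0; (ii) if
β_j² > ((2−2γ)/(2−γ))·‖β_{\j}‖₂²/(M−1) then Δ_j^{*(L)} > 0. -/
theorem loco_linear_sign (M : ℕ) (hM : 2 ≤ M) (γ : ℝ) (hγ0 : 0 < γ) (hγ1 : γ < 1)
    (β : Fin M → ℝ) (j : Fin M) :
    (β j = 0 → (2 - γ) / (2 - 2 * γ) ≤ (M : ℝ) →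
      γ * (2 - γ) * (β j) ^ 2
          - (2 * γ / ((M : ℝ) - 1) - γ ^ 2 * (2 * (M : ℝ) - 1) / ((M : ℝ) - 1) ^ 2)
              * (∑ k ∈ Finset.univ.erase j, (β k) ^ 2) ≤ 0)
    ∧ (((2 - 2 * γ) / (2 - γ)) * (∑ k ∈ Finset.univ.erase j, (β k) ^ 2) / ((M : ℝ) - 1)
          < (β j) ^ 2 →
      0 < γ * (2 - γ) * (β j) ^ 2
          - (2 * γ / ((M : ℝ) - 1) - γ ^ 2 * (2 * (M : ℝ) - 1) / ((M : ℝ) - 1) ^ 2)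
              * (∑ k ∈ Finset.univ.erase j, (β k) ^ 2)) := by
  have hm : (2:ℝ) ≤ (M:ℝ) := by exact_mod_cast hM
  have hm1 : (0:ℝ) < (M:ℝ) - 1 := by linarith
  set S := ∑ k ∈ Finset.univ.erase j, (β k) ^ 2 with hSdef
  have hS : 0 ≤ S := Finset.sum_nonneg fun k _ => sq_nonneg _
  have hcoef : 2 * γ / ((M:ℝ) - 1) - γ ^ 2 * (2 * (M:ℝ) - 1) / ((M:ℝ) - 1) ^ 2
      = γ * ((2 - 2*γ) * (M:ℝ) - (2 - γ)) / ((M:ℝ) - 1) ^ 2 := by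
    field_simp
    ring
  constructor
  · intro hβ hMγ
    rw [hβ, hcoef]
    have h2γ : (0:ℝ) < 2 - 2*γ := by linarith
    have hnum : 0 ≤ (2 - 2*γ) * (M:ℝ) - (2 - γ) := by
      rw [div_le_iff₀ h2γ] at hMγ
      nlinarith
    have : 0 ≤ γ * ((2 - 2*γ) * (M:ℝ) - (2 - γ)) / ((M:ℝ) - 1) ^ 2 * S := by
      apply mul_nonneg _ hS
      positivity
    nlinarith
  · intro hlt
    rw [hcoef]
    have h2γ : (0:ℝ) < 2 - γ := by linarith
    have hlt' : (2 - 2*γ) * S / ((M:ℝ) - 1) < (2 - γ) * (β j)^2 := by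
      rw [div_lt_iff₀ hm1] at hlt ⊢
      rw [div_mul_eq_mul_div, div_lt_iff₀ h2γ] at hlt
      nlinarith
    -- coefficient * S ≤ γ*(2-2γ)/(M-1) * S
    have hcle : γ * ((2 - 2*γ) * (M:ℝ) - (2 - γ)) / ((M:ℝ) - 1) ^ 2 * S
        ≤ γ * (2 - 2*γ) / ((M:ℝ) - 1) * S := by
      apply mul_le_mul_of_nonneg_right _ hS
      rw [div_le_div_iff₀ (by positivity) hm1]
      nlinarith
    have hfin : γ * (2 - 2*γ) / ((M:ℝ) - 1) * S < γ * (2 - γ) * (β j)^2 := by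
      have := mul_lt_mul_of_pos_left hlt' hγ0
      calc γ * (2 - 2*γ) / ((M:ℝ) - 1) * S = γ * ((2 - 2*γ) * S / ((M:ℝ) - 1)) := by ring
        _ < γ * ((2 - γ) * (β j)^2) := this
        _ = γ * (2 - γ) * (β j)^2 := by ring
    linarith
end

section
/- In the fully correlated limit (ρ → 1) of the two-correlated-features linear model, the leading feature-importance term for feature 1 satisfies lim_{ρ→1} Δ₁^{*(L)} = γ(2−γ)·((M−m−1)/(M−1))²·(β₁* + β₂*)² − γ(2/(M−1) − m(2M−1)/((M−1)²M))·‖β*_{\(1,2)}‖₂², where γ = m/M. In particular it depends on features 1 and 2 only through the sum β₁* + β₂*. -/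
open Filter

/-- In the fully correlated limit ρ → 1 of the two-correlated-features linear
model, Δ₁^{*(L)}(ρ) tends to γ(2−γ)·((M−m−1)/(M−1))²·(β₁+β₂)² −
γ(2/(M−1) − m(2M−1)/((M−1)²M))·‖β_{\(1,2)}‖₂², where γ = m/M and γ' = m/(M−1). -/
theorem loco_correlated_limit (M m : ℕ) (hM : 2 ≤ M) (hm : 1 ≤ m) (hmM : m < M)
    (γ γ' : ℝ) (hγ : γ = (m : ℝ) / M) (hγ' : γ' = (m : ℝ) / ((M : ℝ) - 1))
    (b1 b2 s : ℝ) (hs : 0 ≤ s) :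
    Filter.Tendsto (fun ρ : ℝ =>
        (2 * γ - γ ^ 2) * (1 - 2 * γ' * ρ ^ 2 + γ' ^ 2 * ρ ^ 2) * b1 ^ 2
        + ((-2 * γ' + γ' ^ 2) * (1 - ρ ^ 2)
            + (2 * γ - γ ^ 2) * (1 - 2 * γ' * ρ ^ 2 + γ' ^ 2 * ρ ^ 2)) * b2 ^ 2
        + 2 * (γ' ^ 2 * (1 - ρ ^ 2) * ρ
            + (2 * γ - γ ^ 2) * (1 - 2 * γ' + γ' ^ 2 * ρ ^ 2) * ρ) * b1 * b2
        - (γ ^ 2 - γ' ^ 2 - 2 * γ + 2 * γ') * s)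
      (nhds 1)
      (nhds (γ * (2 - γ) * (((M : ℝ) - (m : ℝ) - 1) / ((M : ℝ) - 1)) ^ 2 * (b1 + b2) ^ 2
        - γ * (2 / ((M : ℝ) - 1)
            - (m : ℝ) * (2 * (M : ℝ) - 1) / (((M : ℝ) - 1) ^ 2 * (M : ℝ))) * s)) := by
  have hM0 : (M:ℝ) ≠ 0 := by positivity
  have hM1 : (M:ℝ) - 1 ≠ 0 := by
    have : (2:ℝ) ≤ M := by exact_mod_cast hM
    linarith
  apply Continuous.tendsto' (by continuity) 1
  subst hγ hγ'
  field_simp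
  ring
end

section
/- Let 𝐀_F = (1/C(N,n)²) ∑_{I,I'⊆[N], |I|=|I'|=n} R_I^⊤ X_{I,F}(X_{I,F}^⊤X_{I,F})^{-1}(X_{I',F}^⊤X_{I',F})^{-1}X_{I',F}^⊤ R_{I'} ∈ ℝ^{N×N}, where each X_{I,F} has full column rank m. Then tr(𝐀_F) ≤ (mn/N)·(1/C(N,n)) ∑_{I⊆[N],|I|=n} σ_min^{-2}(X_{I,F}). -/
/-!
With `B_I = R_Iᵀ X_{I,F} (X_{I,F}ᵀ X_{I,F})⁻¹`, the matrix `𝐀_F` factors as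
`C(N,n)⁻² (∑_I B_I)(∑_I B_I)ᵀ`, so its trace is `C(N,n)⁻²` times the squared Frobenius norm of
`∑_I B_I`. Row `i` of `B_I` vanishes unless `i ∈ I`, and exactly `n C(N,n) / N` of the sets `I`
contain `i`; Cauchy–Schwarz on each entry then bounds that norm by `n C(N,n) / N · ∑_I ‖B_I‖_F²`.
Finally `‖B_I‖_F² = tr (X_{I,F}ᵀ X_{I,F})⁻¹`, and each diagonal entry `e_kᵀ G⁻¹ e_k` of an inverse
Gram matrix `G = AᵀA` is at most `σ_min⁻²(A)`: for `w = G⁻¹ e_k` the Rayleigh bound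
`σ_min² w_k² ≤ σ_min² ‖w‖² ≤ ‖A w‖² = w_k` gives it.
-/

open Finset Matrix

/-- Row/coordinate selection matrix R_I ∈ ℝ^{k×N} for a size-k subset I of Fin N. -/
noncomputable def selMat {N k : ℕ} (I : Finset (Fin N)) (h : I.card = k) :
    Matrix (Fin k) (Fin N) ℝ :=
  Matrix.of fun a j => if (↑(I.orderIsoOfFin h a) : Fin N) = j then (1 : ℝ) else 0

/-- Minipatch submatrix X_{I,F} = R_I X R_Fᵀ. -/
noncomputable def mpMat (N M n m : ℕ) (X : Matrix (Fin N) (Fin M) ℝ)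
    (F : Finset (Fin M)) (hF : F.card = m) (I : Finset (Fin N)) (hI : I.card = n) :
    Matrix (Fin n) (Fin m) ℝ :=
  selMat I hI * X * (selMat F hF)ᵀ

/-- Smallest squared singular value σ_min(A)², via the Rayleigh quotient. -/
noncomputable def sminSq {n m : ℕ} (A : Matrix (Fin n) (Fin m) ℝ) : ℝ :=
  ⨅ v : {v : Fin m → ℝ // ∑ j, (v j) ^ 2 = 1}, ∑ i, (A.mulVec v.1 i) ^ 2

/-- The matrix 𝐀_F = (1/C(N,n)²) ∑_{I,I'} R_Iᵀ X_{I,F}(X_{I,F}ᵀX_{I,F})⁻¹(X_{I',F}ᵀX_{I',F})⁻¹X_{I',F}ᵀ R_{I'}. -/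
noncomputable def AF (N M n m : ℕ) (X : Matrix (Fin N) (Fin M) ℝ)
    (F : Finset (Fin M)) (hF : F.card = m) : Matrix (Fin N) (Fin N) ℝ :=
  ((N.choose n : ℝ) ^ 2)⁻¹ •
    ∑ I ∈ (Finset.powersetCard n (Finset.univ : Finset (Fin N))).attach,
      ∑ J ∈ (Finset.powersetCard n (Finset.univ : Finset (Fin N))).attach,
        (selMat I.1 (Finset.mem_powersetCard.mp I.2).2)ᵀ *
          mpMat N M n m X F hF I.1 (Finset.mem_powersetCard.mp I.2).2 *
          ((mpMat N M n m X F hF I.1 (Finset.mem_powersetCard.mp I.2).2)ᵀ *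
            mpMat N M n m X F hF I.1 (Finset.mem_powersetCard.mp I.2).2)⁻¹ *
          ((mpMat N M n m X F hF J.1 (Finset.mem_powersetCard.mp J.2).2)ᵀ *
            mpMat N M n m X F hF J.1 (Finset.mem_powersetCard.mp J.2).2)⁻¹ *
          (mpMat N M n m X F hF J.1 (Finset.mem_powersetCard.mp J.2).2)ᵀ *
          selMat J.1 (Finset.mem_powersetCard.mp J.2).2

theorem Finset.card_filter_mem_powersetCard_mul_card {α : Type*} [DecidableEq α] {s : Finset α}
    {a : α} (ha : a ∈ s) (n : ℕ) :
    #{t ∈ powersetCard n s | a ∈ t} * #s = n * (#s).choose n := by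
  cases n with
  | zero => simp [filter_eq_empty_iff]
  | succ k =>
    have hcard : #{t ∈ powersetCard (k + 1) s | a ∈ t} = #(powersetCard k (s.erase a)) := by
      have notMem_of_subset_erase {t : Finset α} (ht : t ⊆ s.erase a) : a ∉ t :=
        fun h => (mem_erase.1 (ht h)).1 rfl
      refine card_nbij' (·.erase a) (insert a) ?_ ?_ ?_ ?_ <;> intro t ht <;>
        simp only [mem_coe, mem_filter, mem_powersetCard] at ht ⊢
      · refine ⟨erase_subset_erase a ht.1.1, ?_⟩
        rw [card_erase_of_mem ht.2, ht.1.2, Nat.add_sub_cancel]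
      · refine ⟨⟨insert_subset ha (ht.1.trans (erase_subset a s)), ?_⟩, mem_insert_self a t⟩
        rw [card_insert_of_notMem (notMem_of_subset_erase ht.1), ht.2]
      · exact insert_erase ht.2
      · exact erase_insert (notMem_of_subset_erase ht.1)
    obtain ⟨p, hp⟩ := Nat.exists_eq_add_one.2 (card_pos.2 ⟨a, ha⟩)
    rw [hcard, card_powersetCard, card_erase_of_mem ha, hp, Nat.add_sub_cancel, mul_comm,
      Nat.add_one_mul_choose_eq, mul_comm]

theorem card_attach_filter_mem_powersetCard_univ {N : ℕ} (n : ℕ) (i : Fin N) :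
    (#{I ∈ (powersetCard n (univ : Finset (Fin N))).attach | i ∈ I.1} : ℝ) =
      n * N.choose n / N := by
  have hcount := card_filter_mem_powersetCard_mul_card (mem_univ i) n
  rw [card_univ, Fintype.card_fin] at hcount
  rw [filter_attach (fun t => i ∈ t), card_map, card_attach, eq_div_iff (Nat.cast_pos.2 i.pos).ne']
  exact_mod_cast hcount

theorem sq_sum_le_card_filter_mul_sum_sq {ι : Type*} (s : Finset ι) (p : ι → Prop)
    [DecidablePred p] (f : ι → ℝ) (hf : ∀ i ∈ s, ¬ p i → f i = 0) :
    (∑ i ∈ s, f i) ^ 2 ≤ #{i ∈ s | p i} * ∑ i ∈ s, f i ^ 2 := by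
  rw [← sum_filter_of_ne fun i hi hfi => by_contra fun hpi => hfi (hf i hi hpi)]
  calc (∑ i ∈ s with p i, f i) ^ 2 ≤ #{i ∈ s | p i} * ∑ i ∈ s with p i, f i ^ 2 :=
        sq_sum_le_card_mul_sum_sq
    _ ≤ #{i ∈ s | p i} * ∑ i ∈ s, f i ^ 2 :=
        mul_le_mul_of_nonneg_left
          (sum_le_sum_of_subset_of_nonneg (filter_subset p s) fun i _ _ => sq_nonneg (f i))
          (Nat.cast_nonneg _)

theorem Matrix.sum_sq_sum_le_of_row_support {ι α β : Type*} [Fintype α] [DecidableEq α]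
    [Fintype β] (s : Finset ι) (B : ι → Matrix α β ℝ) (S : ι → Finset α)
    (hB : ∀ I ∈ s, ∀ i ∉ S I, ∀ k, B I i k = 0) {c : ℝ}
    (hc : ∀ i, (#{I ∈ s | i ∈ S I} : ℝ) ≤ c) :
    ∑ i, ∑ k, (∑ I ∈ s, B I i k) ^ 2 ≤ c * ∑ I ∈ s, ∑ i, ∑ k, B I i k ^ 2 := by
  have hc0 : ∀ i k, 0 ≤ ∑ I ∈ s, B I i k ^ 2 := fun i k => sum_nonneg fun I _ => sq_nonneg _
  calc ∑ i, ∑ k, (∑ I ∈ s, B I i k) ^ 2 ≤ ∑ i, ∑ k, c * ∑ I ∈ s, B I i k ^ 2 := by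
        gcongr with i _ k _
        exact (sq_sum_le_card_filter_mul_sum_sq s _ _ fun I hI hi => hB I hI i hi k).trans
          (mul_le_mul_of_nonneg_right (hc i) (hc0 i k))
    _ = c * ∑ I ∈ s, ∑ i, ∑ k, B I i k ^ 2 := by
        rw [← sum_comm_cycle]
        simp only [← mul_sum]

theorem Matrix.sum_sq_mulVec_le {α β : Type*} [Fintype α] [Fintype β] (A : Matrix α β ℝ)
    (v : β → ℝ) : ∑ i, (A *ᵥ v) i ^ 2 ≤ (∑ i, ∑ j, A i j ^ 2) * ∑ j, v j ^ 2 := by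
  rw [sum_mul]
  exact sum_le_sum fun i _ => sum_mul_sq_le_sq_mul_sq univ (A i) v

theorem Matrix.sum_sq_mulVec_eq_dotProduct {α β : Type*} [Fintype α] [Fintype β]
    (A : Matrix α β ℝ) (v : β → ℝ) : ∑ i, (A *ᵥ v) i ^ 2 = v ⬝ᵥ (Aᵀ * A) *ᵥ v := by
  rw [← mulVec_mulVec, dotProduct_mulVec, vecMul_transpose]
  simp only [dotProduct, sq]

section sminSq

variable {n m : ℕ} (A : Matrix (Fin n) (Fin m) ℝ)

theorem sminSq_mul_sum_sq_le (v : Fin m → ℝ) :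
    sminSq A * ∑ j, v j ^ 2 ≤ ∑ i, (A *ᵥ v) i ^ 2 := by
  set s := ∑ j, v j ^ 2
  have hs0 : 0 ≤ s := sum_nonneg fun j _ => sq_nonneg (v j)
  rcases hs0.eq_or_lt with hs | hs
  · rw [← hs, mul_zero]
    exact sum_nonneg fun _ _ => sq_nonneg _
  set c := √s⁻¹
  have hc : c ^ 2 = s⁻¹ := Real.sq_sqrt (inv_nonneg.2 hs.le)
  have hunit : ∑ j, (c • v) j ^ 2 = 1 := by
    simp only [Pi.smul_apply, smul_eq_mul, mul_pow, ← mul_sum, hc]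
    exact inv_mul_cancel₀ hs.ne'
  have hle : sminSq A ≤ ∑ i, (A *ᵥ (c • v)) i ^ 2 :=
    ciInf_le ⟨0, by rintro _ ⟨w, rfl⟩; exact sum_nonneg fun _ _ => sq_nonneg _⟩
      (⟨c • v, hunit⟩ : {v : Fin m → ℝ // ∑ j, v j ^ 2 = 1})
  simp only [mulVec_smul, Pi.smul_apply, smul_eq_mul, mul_pow, ← mul_sum, hc] at hle
  rwa [← le_div_iff₀ hs, div_eq_inv_mul]

variable {A}

theorem sminSq_pos (hm : 0 < m) (hA : IsUnit (Aᵀ * A).det) : 0 < sminSq A := by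
  -- `v = ((AᵀA)⁻¹Aᵀ) (A v)` bounds `‖v‖²` by a fixed multiple of `‖A v‖²`
  set P := (Aᵀ * A)⁻¹ * Aᵀ
  set f := ∑ j, ∑ i, P j i ^ 2
  have hbound (v : Fin m → ℝ) : ∑ j, v j ^ 2 ≤ f * ∑ i, (A *ᵥ v) i ^ 2 := by
    have hPA : P *ᵥ (A *ᵥ v) = v := by
      rw [mulVec_mulVec, Matrix.mul_assoc, nonsing_inv_mul _ hA, one_mulVec]
    simpa only [hPA] using sum_sq_mulVec_le P (A *ᵥ v)
  let e : {v : Fin m → ℝ // ∑ j, v j ^ 2 = 1} :=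
    ⟨Pi.single ⟨0, hm⟩ 1, by simp [sq, Pi.single_apply]⟩
  have hf : 0 < f :=
    pos_of_mul_pos_left (one_pos.trans_le (e.2 ▸ hbound e.1)) (sum_nonneg fun _ _ => sq_nonneg _)
  have : Nonempty {v : Fin m → ℝ // ∑ j, v j ^ 2 = 1} := ⟨e⟩
  refine (inv_pos.2 hf).trans_le (le_ciInf fun v => ?_)
  rw [inv_le_iff_one_le_mul₀' hf]
  simpa only [v.2] using hbound v.1

theorem gram_inv_apply_self_le (hA : IsUnit (Aᵀ * A).det) (k : Fin m) :
    (Aᵀ * A)⁻¹ k k ≤ (sminSq A)⁻¹ := by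
  set w := (Aᵀ * A)⁻¹ *ᵥ Pi.single k 1
  have hw : w k = (Aᵀ * A)⁻¹ k k := by simp [w]
  have hquad : ∑ i, (A *ᵥ w) i ^ 2 = w k := by
    rw [sum_sq_mulVec_eq_dotProduct, mulVec_mulVec, mul_nonsing_inv _ hA, one_mulVec,
      dotProduct_single_one]
  have hpos := sminSq_pos k.pos hA
  have hd : 0 ≤ w k := hquad ▸ sum_nonneg fun _ _ => sq_nonneg _
  have hsq : w k ^ 2 ≤ ∑ j, w j ^ 2 :=
    single_le_sum (f := fun j => w j ^ 2) (fun j _ => sq_nonneg _) (mem_univ k)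
  have hray : sminSq A * w k ^ 2 ≤ w k :=
    (mul_le_mul_of_nonneg_left hsq hpos.le).trans (hquad ▸ sminSq_mul_sum_sq_le A w)
  rw [← hw, ← mul_one (sminSq A)⁻¹, le_inv_mul_iff₀ hpos]
  nlinarith

theorem trace_gram_inv_le (hA : IsUnit (Aᵀ * A).det) :
    trace (Aᵀ * A)⁻¹ ≤ m * (sminSq A)⁻¹ := by
  calc trace (Aᵀ * A)⁻¹ ≤ ∑ _k : Fin m, (sminSq A)⁻¹ :=
        sum_le_sum fun k _ => gram_inv_apply_self_le hA k
    _ = m * (sminSq A)⁻¹ := by simp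

end sminSq

theorem Matrix.trace_mul_transpose_self {α β : Type*} [Fintype α] [Fintype β]
    (P : Matrix α β ℝ) : trace (P * Pᵀ) = ∑ i, ∑ k, P i k ^ 2 := by
  simp only [trace, diag, mul_apply, transpose_apply, sq]

section liftPinvT

variable {κ ν μ : Type*} [Fintype κ] [Fintype μ] [DecidableEq μ]

/-- `Rᵀ (A⁺)ᵀ`, where `A⁺ = (AᵀA)⁻¹Aᵀ` is the left pseudo-inverse of `A`. -/
noncomputable def liftPinvT (R : Matrix κ ν ℝ) (A : Matrix κ μ ℝ) : Matrix ν μ ℝ :=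
  Rᵀ * A * (Aᵀ * A)⁻¹

theorem liftPinvT_mul_transpose_liftPinvT (R R' : Matrix κ ν ℝ) (A A' : Matrix κ μ ℝ) :
    liftPinvT R A * (liftPinvT R' A')ᵀ =
      Rᵀ * A * (Aᵀ * A)⁻¹ * (A'ᵀ * A')⁻¹ * A'ᵀ * R' := by
  simp only [liftPinvT, transpose_mul, transpose_nonsing_inv, transpose_transpose,
    Matrix.mul_assoc]

theorem sum_sq_liftPinvT [DecidableEq κ] [Fintype ν] {R : Matrix κ ν ℝ} {A : Matrix κ μ ℝ}
    (hR : R * Rᵀ = 1) (hA : IsUnit (Aᵀ * A).det) :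
    ∑ i, ∑ k, liftPinvT R A i k ^ 2 = trace (Aᵀ * A)⁻¹ := by
  have hgram : (liftPinvT R A)ᵀ * liftPinvT R A = (Aᵀ * A)⁻¹ := by
    simp only [liftPinvT, transpose_mul, transpose_nonsing_inv, transpose_transpose,
      Matrix.mul_assoc]
    rw [← Matrix.mul_assoc R, hR, Matrix.one_mul, ← Matrix.mul_assoc Aᵀ,
      ← Matrix.mul_assoc _ (Aᵀ * A), nonsing_inv_mul _ hA, Matrix.one_mul]
  rw [← trace_mul_transpose_self, trace_mul_comm, hgram]

end liftPinvT

theorem selMat_mul_transpose {N k : ℕ} (I : Finset (Fin N)) (h : I.card = k) :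
    selMat I h * (selMat I h)ᵀ = 1 := by
  ext a b
  simp only [selMat, mul_apply, transpose_apply, of_apply, ite_mul, one_mul, zero_mul,
    sum_ite_eq, mem_univ, if_true, one_apply, Subtype.coe_inj,
    (I.orderIsoOfFin h).injective.eq_iff]
  exact if_congr eq_comm rfl rfl

theorem transpose_selMat_mul_apply_of_notMem {N k : ℕ} {I : Finset (Fin N)} (h : I.card = k)
    {β : Type*} (P : Matrix (Fin k) β ℝ) {i : Fin N} (hi : i ∉ I) (c : β) :
    ((selMat I h)ᵀ * P) i c = 0 := by
  rw [mul_apply]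
  refine sum_eq_zero fun a _ => ?_
  have hne : ((I.orderIsoOfFin h a : Fin N)) ≠ i := fun e => hi (e ▸ (I.orderIsoOfFin h a).2)
  simp only [selMat, transpose_apply, of_apply, if_neg hne, zero_mul]

theorem trace_AF_le_general (N M n m : ℕ)
    (X : Matrix (Fin N) (Fin M) ℝ) (F : Finset (Fin M)) (hF : F.card = m)
    (hrank : ∀ (I : Finset (Fin N)) (hI : I.card = n),
      IsUnit ((mpMat N M n m X F hF I hI)ᵀ * mpMat N M n m X F hF I hI).det) :
    Matrix.trace (AF N M n m X F hF)
      ≤ ((m : ℝ) * n / N) * (N.choose n : ℝ)⁻¹ *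
          ∑ I ∈ (Finset.powersetCard n (Finset.univ : Finset (Fin N))).attach,
            (sminSq (mpMat N M n m X F hF I.1 (Finset.mem_powersetCard.mp I.2).2))⁻¹ := by
  set s := (powersetCard n (univ : Finset (Fin N))).attach
  set C : ℝ := (N.choose n : ℝ)
  let A (I : {I // I ∈ powersetCard n univ}) : Matrix (Fin n) (Fin m) ℝ :=
    mpMat N M n m X F hF I.1 (mem_powersetCard.mp I.2).2
  let B (I : {I // I ∈ powersetCard n univ}) : Matrix (Fin N) (Fin m) ℝ :=
    liftPinvT (selMat I.1 (mem_powersetCard.mp I.2).2) (A I)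
  have hAF : AF N M n m X F hF = (C ^ 2)⁻¹ • ((∑ I ∈ s, B I) * (∑ I ∈ s, B I)ᵀ) := by
    rw [AF, transpose_sum, Matrix.sum_mul]
    simp only [Matrix.mul_sum, B, A, liftPinvT_mul_transpose_liftPinvT]
    rfl
  calc trace (AF N M n m X F hF) = (C ^ 2)⁻¹ * ∑ i, ∑ k, (∑ I ∈ s, B I i k) ^ 2 := by
        rw [hAF, trace_smul, trace_mul_transpose_self, smul_eq_mul]
        simp only [Matrix.sum_apply]
    _ ≤ (C ^ 2)⁻¹ * (n * C / N * ∑ I ∈ s, ∑ i, ∑ k, B I i k ^ 2) := by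
        gcongr
        refine sum_sq_sum_le_of_row_support s B (fun I => I.1) (fun I _ i hi k => ?_)
          fun i => (card_attach_filter_mem_powersetCard_univ n i).le
        simp only [B, liftPinvT, Matrix.mul_assoc]
        exact transpose_selMat_mul_apply_of_notMem _ _ hi k
    _ ≤ (C ^ 2)⁻¹ * (n * C / N * ∑ I ∈ s, m * (sminSq (A I))⁻¹) := by
        gcongr with I
        rw [sum_sq_liftPinvT (selMat_mul_transpose _ _) (hrank _ _)]
        exact trace_gram_inv_le (hrank _ _)
    _ = _ := by
        rw [← mul_sum]
        rcases eq_or_ne C 0 with h | h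
        · simp [h]
        · field_simp
          rfl

/-- tr(𝐀_F) ≤ (mn/N)·(1/C(N,n)) ∑_I σ_min⁻²(X_{I,F}). -/
theorem trace_AF_le (N M n m : ℕ) (hm : 0 < m) (hmn : m ≤ n) (hn : n ≤ N)
    (X : Matrix (Fin N) (Fin M) ℝ) (F : Finset (Fin M)) (hF : F.card = m)
    (hrank : ∀ (I : Finset (Fin N)) (hI : I.card = n),
      IsUnit ((mpMat N M n m X F hF I hI)ᵀ * mpMat N M n m X F hF I hI).det) :
    Matrix.trace (AF N M n m X F hF)
      ≤ ((m : ℝ) * n / N) * (N.choose n : ℝ)⁻¹ *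
          ∑ I ∈ (Finset.powersetCard n (Finset.univ : Finset (Fin N))).attach,
            (sminSq (mpMat N M n m X F hF I.1 (Finset.mem_powersetCard.mp I.2).2))⁻¹ :=
  trace_AF_le_general N M n m X F hF hrank
end

section
/- For the regression J+MP interval with absolute-error nonconformity: if Y_{N+1} ∉ [q⁻_{N,α}{μ̂₋ᵢ(X_{N+1}) − Rᵢ}, q⁺_{N,α}{μ̂₋ᵢ(X_{N+1}) + Rᵢ}], then ∑_{i=1}^N 𝟙(|Y_{N+1} − μ̂₋ᵢ(X_{N+1})| ≥ Rᵢ) ≥ (1−α)(N+1). -/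
open Finset

/-- The k-th smallest value (1-indexed) among v 0, …, v (N−1): the infimum of all x such
that at least k of the values are ≤ x. -/
noncomputable def kthSmallest {N : ℕ} (v : Fin N → ℝ) (k : ℕ) : ℝ :=
  sInf {x : ℝ | k ≤ (Finset.univ.filter (fun i => v i ≤ x)).card}

lemma kth_bdd_aux {N : ℕ} (hN : 0 < N) (w : Fin N → ℝ) (k : ℕ) (hk : 1 ≤ k) :
    BddBelow {x : ℝ | k ≤ (Finset.univ.filter (fun i => w i ≤ x)).card} := by
  have hne : (Finset.univ : Finset (Fin N)).Nonempty := ⟨⟨0, hN⟩, mem_univ _⟩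
  refine ⟨(univ.image w).min' (hne.image w), ?_⟩
  intro x hx
  have hcard : 0 < (univ.filter (fun i => w i ≤ x)).card := Nat.lt_of_lt_of_le hk hx
  obtain ⟨i, hi⟩ := Finset.card_pos.mp hcard
  exact le_trans (Finset.min'_le _ _ (mem_image_of_mem w (mem_univ i)))
    (mem_filter.mp hi).2

/-- For the regression J+MP interval with absolute-error nonconformity: if
Y_{N+1} lies outside [q⁻_{N,α}{μ̂₋ᵢ − Rᵢ}, q⁺_{N,α}{μ̂₋ᵢ + Rᵢ}] (with q⁺ the
⌈(1−α)(N+1)⌉-th smallest and q⁻ the ⌊α(N+1)⌋-th smallest), then at least (1−α)(N+1) indices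
i satisfy |Y_{N+1} − μ̂₋ᵢ| ≥ Rᵢ. -/
theorem jmp_interval_rank_count (N : ℕ) (α : ℝ) (hα0 : 0 < α) (hα1 : α < 1)
    (hreg : 1 ≤ α * ((N : ℝ) + 1))
    (μhat R : Fin N → ℝ) (hR : ∀ i, 0 ≤ R i) (Y : ℝ)
    (hY : Y < kthSmallest (fun i => μhat i - R i) (Nat.floor (α * ((N : ℝ) + 1)))
        ∨ kthSmallest (fun i => μhat i + R i) (Nat.ceil ((1 - α) * ((N : ℝ) + 1))) < Y) :
    (1 - α) * ((N : ℝ) + 1)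
      ≤ ((Finset.univ.filter (fun i : Fin N => R i ≤ |Y - μhat i|)).card : ℝ) := by
  have hN : 0 < N := by
    rcases Nat.eq_zero_or_pos N with h | h
    · subst h; simp at hreg; linarith
    · exact h
  have hαN : (0:ℝ) ≤ α * ((N : ℝ) + 1) := by positivity
  set kminus := Nat.floor (α * ((N : ℝ) + 1)) with hkm
  set kplus := Nat.ceil ((1 - α) * ((N : ℝ) + 1)) with hkp
  have hkm1 : 1 ≤ kminus := Nat.le_floor (by exact_mod_cast hreg)
  have hkp1 : 1 ≤ kplus := by
    have : (0:ℝ) < (1 - α) * ((N : ℝ) + 1) := by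
      have : (0:ℝ) < (N:ℝ) + 1 := by positivity
      nlinarith
    exact Nat.one_le_iff_ne_zero.mpr (by positivity)
  rcases hY with hY1 | hY2
  · -- left tail: #{i : μhat i - R i ≤ Y} < kminus
    have hbdd := kth_bdd_aux hN (fun i => μhat i - R i) kminus hkm1
    have hnot : ¬ (kminus ≤ (univ.filter (fun i => μhat i - R i ≤ Y)).card) := by
      intro h
      exact absurd (csInf_le hbdd h) (not_le.mpr hY1)
    have hlt : (univ.filter (fun i => μhat i - R i ≤ Y)).card ≤ kminus - 1 :=
      Nat.le_sub_one_of_lt (Nat.lt_of_not_le hnot)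
    have hsub : univ.filter (fun i : Fin N => ¬ (μhat i - R i ≤ Y)) ⊆
        univ.filter (fun i : Fin N => R i ≤ |Y - μhat i|) := by
      intro i hi
      rw [mem_filter] at hi ⊢
      refine ⟨mem_univ i, ?_⟩
      have h1 : Y < μhat i - R i := lt_of_not_ge hi.2
      have h2 : μhat i - Y ≤ |Y - μhat i| := by
        rw [abs_sub_comm]; exact le_abs_self _
      linarith
    have hcards := Finset.card_filter_add_card_filter_not
      (s := (univ : Finset (Fin N))) (p := fun i : Fin N => μhat i - R i ≤ Y)
    rw [Finset.card_univ, Fintype.card_fin] at hcards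
    have hge : N - (kminus - 1) ≤ (univ.filter (fun i : Fin N => R i ≤ |Y - μhat i|)).card := by
      calc N - (kminus - 1)
          ≤ (univ.filter (fun i : Fin N => ¬ (μhat i - R i ≤ Y))).card := by omega
        _ ≤ _ := Finset.card_le_card hsub
    have hkmle : (kminus : ℝ) ≤ α * ((N : ℝ) + 1) := Nat.floor_le hαN
    have hkmN : kminus ≤ N := by
      have : (kminus : ℝ) < (N:ℝ) + 1 := by nlinarith
      exact_mod_cast Nat.lt_succ_iff.mp (by exact_mod_cast this)
    have : ((N - (kminus - 1) : ℕ) : ℝ) = (N : ℝ) - (kminus : ℝ) + 1 := by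
      have : kminus - 1 ≤ N := by omega
      push_cast [Nat.cast_sub this, Nat.cast_sub hkm1]
      ring
    have hcast : ((N : ℝ) - (kminus : ℝ) + 1) ≤
        ((univ.filter (fun i : Fin N => R i ≤ |Y - μhat i|)).card : ℝ) := by
      rw [← this]; exact_mod_cast hge
    nlinarith
  · -- right tail
    have hkpN : kplus ≤ N := by
      rw [hkp, Nat.ceil_le]
      nlinarith
    have hne2 : {x : ℝ | kplus ≤ (univ.filter (fun i => μhat i + R i ≤ x)).card}.Nonempty := by
      have hne : (Finset.univ : Finset (Fin N)).Nonempty := ⟨⟨0, hN⟩, mem_univ _⟩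
      set M := (univ.image (fun i => μhat i + R i)).max' (hne.image (fun i => μhat i + R i)) with hM
      refine ⟨M, ?_⟩
      have : univ.filter (fun i : Fin N => μhat i + R i ≤ M) = univ := by
        apply Finset.filter_true_of_mem
        intro i _
        exact Finset.le_max' _ _ (mem_image_of_mem (fun i => μhat i + R i) (mem_univ i))
      simp only [Set.mem_setOf_eq, this, Finset.card_univ, Fintype.card_fin]
      exact hkpN
    have hbdd := kth_bdd_aux hN (fun i => μhat i + R i) kplus hkp1
    obtain ⟨x, hxS, hxY⟩ := (csInf_lt_iff hbdd hne2).mp hY2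
    have hsub : univ.filter (fun i : Fin N => μhat i + R i ≤ x) ⊆
        univ.filter (fun i : Fin N => R i ≤ |Y - μhat i|) := by
      intro i hi
      rw [mem_filter] at hi ⊢
      refine ⟨mem_univ i, ?_⟩
      have h1 : μhat i + R i ≤ x := hi.2
      have h2 : Y - μhat i ≤ |Y - μhat i| := le_abs_self _
      linarith
    have hge : kplus ≤ (univ.filter (fun i : Fin N => R i ≤ |Y - μhat i|)).card :=
      le_trans hxS (Finset.card_le_card hsub)
    calc (1 - α) * ((N : ℝ) + 1) ≤ (kplus : ℝ) := Nat.le_ceil _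
      _ ≤ _ := by exact_mod_cast hge
end
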